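/- For r = 4, with u₀ = 0, u₁ = 1, u_{i+2} = 2u_{i+1} - u_i (so u_n = n), the function ρ(n) = 1 + (n-1)/(n+1) satisfies: the only multisets (n₁,…,n_s) of positive integers with ρ(n₁)+⋯+ρ(n_s) = 4 are (1,1,1,1), (2,2,2), (1,3,3), and (1,2,5). -/

import Mathlib

/-!
Since ρ(n) = 2 - 2/(n+1), the equation Σ ρ(nᵢ) = 4 says Σ 1/(nᵢ+1) = s - 2. Each term lies in
(0, 1/2], which forces s ∈ {3, 4}. For s = 4 every term must equal 1/2, so all nᵢ = 1. For s = 3,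
clearing denominators in 1/(a+1) + 1/(b+1) + 1/(c+1) = 1 gives abc = a + b + c + 2, and for
a ≤ b ≤ c this forces ab ≤ 5, leaving finitely many cases.
-/

open Multiset

theorem Multiset.exists_le_le_eq_of_card_eq_three {α : Type*} [LinearOrder α] {s : Multiset α}
    (h : card s = 3) : ∃ a b c, a ≤ b ∧ b ≤ c ∧ s = {a, b, c} := by
  obtain ⟨a, b, c, hl⟩ := List.length_eq_three.mp ((s.length_sort (· ≤ ·)).trans h)
  have hsorted := s.pairwise_sort (· ≤ ·)
  simp only [hl, List.pairwise_cons, List.mem_cons, List.not_mem_nil] at hsorted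
  refine ⟨a, b, c, hsorted.1 b (by simp), hsorted.2.1 c (by simp), ?_⟩
  rw [← s.sort_eq (· ≤ ·), hl]
  rfl

theorem Nat.eq_of_mul_mul_eq_add_add_add_two {a b c : ℕ} (hab : a ≤ b) (hbc : b ≤ c)
    (h : a * b * c = a + b + c + 2) :
    a = 2 ∧ b = 2 ∧ c = 2 ∨ a = 1 ∧ b = 3 ∧ c = 3 ∨ a = 1 ∧ b = 2 ∧ c = 5 := by
  have ha : 1 ≤ a := Nat.pos_of_ne_zero (by rintro rfl; omega)
  have hab5 : a * b ≤ 5 := Nat.le_of_mul_le_mul_right (by nlinarith) (by omega : 0 < c)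
  have ha2 : a ≤ 2 := by nlinarith
  have hb5 : b ≤ 5 := by nlinarith
  interval_cases a <;> interval_cases b <;> omega

theorem inv_succ_add_inv_succ_add_inv_succ_eq_one_iff (a b c : ℕ) :
    ((a : ℚ) + 1)⁻¹ + ((b : ℚ) + 1)⁻¹ + ((c : ℚ) + 1)⁻¹ = 1 ↔ a * b * c = a + b + c + 2 := by
  rw [← Nat.cast_inj (R := ℚ)]
  push_cast
  field_simp
  constructor <;> intro h <;> linarith

section

variable {M : Multiset ℕ}

theorem sum_map_inv_succ_le_card_div_two (hM : ∀ n ∈ M, 0 < n) :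
    (M.map fun n : ℕ => ((n : ℚ) + 1)⁻¹).sum ≤ card M / 2 := by
  have := sum_le_card_nsmul (M.map fun n : ℕ => ((n : ℚ) + 1)⁻¹) 2⁻¹ <| by
    simp only [mem_map, forall_exists_index, and_imp, forall_apply_eq_imp_iff₂]
    intro n hn
    have : (1 : ℚ) ≤ n := by exact_mod_cast hM n hn
    gcongr
    linarith
  simpa [div_eq_mul_inv] using this

theorem sum_map_inv_succ_pos (hM : M ≠ 0) : 0 < (M.map fun n : ℕ => ((n : ℚ) + 1)⁻¹).sum := by
  simpa using sum_lt_sum_of_nonempty (f := fun _ => (0 : ℚ)) hM fun n _ => by positivity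

theorem card_eq_three_or_four_of_sum_map_inv_succ (hM : ∀ n ∈ M, 0 < n)
    (h : (M.map fun n : ℕ => ((n : ℚ) + 1)⁻¹).sum = card M - 2) : card M = 3 ∨ card M = 4 := by
  have hle := sum_map_inv_succ_le_card_div_two hM
  have hpos := sum_map_inv_succ_pos (M := M) (by rintro rfl; norm_num at h)
  have : card M ≤ 4 := by exact_mod_cast (by linarith : (card M : ℚ) ≤ 4)
  have : 2 < card M := by exact_mod_cast (by linarith : (2 : ℚ) < card M)
  omega

theorem eq_of_card_eq_four_of_sum_map_inv_succ_eq_two (hM : ∀ n ∈ M, 0 < n) (h4 : card M = 4)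
    (h : (M.map fun n : ℕ => ((n : ℚ) + 1)⁻¹).sum = 2) : M = {1, 1, 1, 1} := by
  suffices ∀ n ∈ M, n = 1 from eq_replicate.mpr ⟨h4, this⟩
  intro n hn
  obtain ⟨M', rfl⟩ := exists_cons_of_mem hn
  by_contra hn1
  have hn2 : (2 : ℚ) ≤ n := by have := hM n (mem_cons_self n M'); norm_cast; omega
  have hrest := sum_map_inv_succ_le_card_div_two fun m hm => hM m (mem_cons_of_mem hm)
  have hcard : (card M' : ℚ) = 3 := by rw [card_cons] at h4; norm_cast; omega
  have : ((n : ℚ) + 1)⁻¹ ≤ 3⁻¹ := by gcongr; linarith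
  rw [map_cons, sum_cons] at h
  linarith

theorem eq_of_card_eq_three_of_sum_map_inv_succ_eq_one (h3 : card M = 3)
    (h : (M.map fun n : ℕ => ((n : ℚ) + 1)⁻¹).sum = 1) :
    M = {2, 2, 2} ∨ M = {1, 3, 3} ∨ M = {1, 2, 5} := by
  obtain ⟨a, b, c, hab, hbc, rfl⟩ := exists_le_le_eq_of_card_eq_three h3
  simp only [insert_eq_cons, map_cons, map_singleton, sum_cons, sum_singleton, ← add_assoc] at h
  rcases Nat.eq_of_mul_mul_eq_add_add_add_two hab hbc
    ((inv_succ_add_inv_succ_add_inv_succ_eq_one_iff a b c).mp h) with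
    ⟨rfl, rfl, rfl⟩ | ⟨rfl, rfl, rfl⟩ | ⟨rfl, rfl, rfl⟩ <;> simp

theorem sum_map_inv_succ_eq_card_sub_two_iff (hM : ∀ n ∈ M, 0 < n) :
    (M.map fun n : ℕ => ((n : ℚ) + 1)⁻¹).sum = card M - 2 ↔
      M = {1, 1, 1, 1} ∨ M = {2, 2, 2} ∨ M = {1, 3, 3} ∨ M = {1, 2, 5} := by
  constructor
  · intro h
    rcases card_eq_three_or_four_of_sum_map_inv_succ hM h with h3 | h4
    · rw [h3] at h
      refine Or.inr (eq_of_card_eq_three_of_sum_map_inv_succ_eq_one h3 ?_)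
      norm_num at h ⊢
      linarith
    · rw [h4] at h
      refine Or.inl (eq_of_card_eq_four_of_sum_map_inv_succ_eq_two hM h4 ?_)
      norm_num at h ⊢
      linarith
  · rintro (rfl | rfl | rfl | rfl) <;> norm_num

end

theorem sum_map_eq_two_mul_card_sub (rho : ℕ → ℚ) (hrho : ∀ n : ℕ, 1 ≤ n → rho n = 2 * n / (n + 1))
    {M : Multiset ℕ} (hM : ∀ n ∈ M, 0 < n) :
    (M.map rho).sum = 2 * card M - 2 * (M.map fun n : ℕ => ((n : ℚ) + 1)⁻¹).sum := by
  calc (M.map rho).sum = (M.map fun n : ℕ => 2 - 2 * ((n : ℚ) + 1)⁻¹).sum := by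
        refine congrArg _ (map_congr rfl fun n hn => ?_)
        rw [hrho n (hM n hn)]
        field_simp
        ring
    _ = _ := by
        rw [sum_map_sub, sum_map_mul_left, map_const', sum_replicate, nsmul_eq_mul]
        ring

theorem stmt_2 (rho : ℕ → ℚ) (hrho : ∀ n : ℕ, 1 ≤ n → rho n = 2 * n / (n + 1)) :
    ∀ M : Multiset ℕ, (∀ n ∈ M, 0 < n) →
      ((M.map rho).sum = 4 ↔
        M = {1, 1, 1, 1} ∨ M = {2, 2, 2} ∨ M = {1, 3, 3} ∨ M = {1, 2, 5}) := by
  intro M hM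
  rw [sum_map_eq_two_mul_card_sub rho hrho hM, ← sum_map_inv_succ_eq_card_sub_two_iff hM]
  constructor <;> intro h <;> linarith
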